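/- arXiv:1303.0529 — 2 statements merged into one kernel-verified Lean document; each statement's English description precedes it below -/
import Mathlib

section
/- Let X and Y be independent nonnegative random variables defined on the same probability space. Then E[ln(1 + X/(1 + Y))] = ∫₀^∞ (exp(-z)/z)·E[exp(-z·Y)]·(1 − E[exp(-z·X)]) dz, where both sides are interpreted as values in [0, ∞] (the integrand on the right-hand side is nonnegative for every z > 0). -/
open MeasureTheory Real Set

/-!
Writing `(e^{-az} - e^{-bz}) / z = ∫_a^b e^{-tz} dt` and exchanging the order of integration
(Tonelli) gives Frullani's integral `∫₀^∞ (e^{-az} - e^{-bz}) / z dz = log (b / a)` for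
`0 < a ≤ b`. With `a = 1 + Y`, `b = 1 + X + Y` this expresses `log (1 + X / (1 + Y))` pointwise
as `∫₀^∞ (e^{-z} / z) e^{-zY} (1 - e^{-zX}) dz`. Taking expectations, Tonelli again moves the
expectation inside, and independence factors `E[e^{-zY} (1 - e^{-zX})]`.
-/

lemma integral_exp_neg_mul_const {z : ℝ} (hz : z ≠ 0) (a b : ℝ) :
    ∫ t in a..b, exp (-(t * z)) = (exp (-(a * z)) - exp (-(b * z))) / z := by
  have hderiv (t : ℝ) : HasDerivAt (fun t => -exp (-(t * z)) / z) (exp (-(t * z))) t := by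
    refine ((hasDerivAt_mul_const z).neg.exp.neg.div_const z).congr_deriv ?_
    field_simp
    simp [mul_comm]
  rw [intervalIntegral.integral_eq_sub_of_hasDerivAt (fun t _ => hderiv t)
    ((by fun_prop : Continuous fun t => exp (-(t * z))).intervalIntegrable _ _)]
  ring

lemma lintegral_exp_neg_mul_Ioi {t : ℝ} (ht : 0 < t) :
    ∫⁻ z in Ioi 0, ENNReal.ofReal (exp (-(t * z))) = ENNReal.ofReal t⁻¹ := by
  simp_rw [← neg_mul]
  rw [← ofReal_integral_eq_lintegral_ofReal (exp_neg_integrableOn_Ioi 0 ht)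
      (Filter.Eventually.of_forall fun z => (exp_pos _).le),
    integral_exp_mul_Ioi (neg_lt_zero.2 ht)]
  simp [div_neg, neg_div]

theorem lintegral_frullani_exp {a b : ℝ} (ha : 0 < a) (hab : a ≤ b) :
    ∫⁻ z in Ioi 0, ENNReal.ofReal ((exp (-(a * z)) - exp (-(b * z))) / z)
      = ENNReal.ofReal (log (b / a)) := by
  have hpos : ∀ t ∈ Ioc a b, 0 < t := fun t ht => ha.trans ht.1
  have hinner : ∀ z ∈ Ioi (0 : ℝ), ENNReal.ofReal ((exp (-(a * z)) - exp (-(b * z))) / z)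
      = ∫⁻ t in Ioc a b, ENNReal.ofReal (exp (-(t * z))) := fun z hz => by
    rw [← integral_exp_neg_mul_const (ne_of_gt hz), intervalIntegral.integral_of_le hab,
      ofReal_integral_eq_lintegral_ofReal (Continuous.integrableOn_Ioc (by fun_prop))
        (Filter.Eventually.of_forall fun t => (exp_pos _).le)]
  calc ∫⁻ z in Ioi 0, ENNReal.ofReal ((exp (-(a * z)) - exp (-(b * z))) / z)
      = ∫⁻ z in Ioi 0, ∫⁻ t in Ioc a b, ENNReal.ofReal (exp (-(t * z))) :=
        setLIntegral_congr_fun measurableSet_Ioi hinner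
    _ = ∫⁻ t in Ioc a b, ∫⁻ z in Ioi 0, ENNReal.ofReal (exp (-(t * z))) :=
        lintegral_lintegral_swap (by fun_prop)
    _ = ∫⁻ t in Ioc a b, ENNReal.ofReal t⁻¹ :=
        setLIntegral_congr_fun measurableSet_Ioc fun t ht => lintegral_exp_neg_mul_Ioi (hpos t ht)
    _ = ENNReal.ofReal (log (b / a)) := by
      rw [← integral_inv_of_pos ha (ha.trans_le hab), intervalIntegral.integral_of_le hab,
        ofReal_integral_eq_lintegral_ofReal]
      · exact (continuousOn_inv₀.mono fun t ht => (ha.trans_le ht.1).ne').integrableOn_Icc.mono_set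
          Ioc_subset_Icc_self
      · exact (ae_restrict_mem measurableSet_Ioc).mono fun t ht => (inv_pos.2 (hpos t ht)).le

lemma ofReal_log_one_add_div_one_add_eq_lintegral {x y : ℝ} (hx : 0 ≤ x) (hy : 0 ≤ y) :
    ENNReal.ofReal (log (1 + x / (1 + y)))
      = ∫⁻ z in Ioi 0, ENNReal.ofReal
          ((exp (-z) / z) * exp (-(z * y)) * (1 - exp (-(z * x)))) := by
  have hy1 : 0 < 1 + y := by linarith
  have hlog : 1 + x / (1 + y) = (1 + y + x) / (1 + y) := by field_simp
  rw [hlog, ← lintegral_frullani_exp hy1 (by linarith)]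
  refine setLIntegral_congr_fun measurableSet_Ioi fun z _ => ?_
  congr 1
  simp only [neg_add, add_mul, one_mul, exp_add]
  ring_nf

section Independence

variable {Ω : Type*} [MeasurableSpace Ω] {μ : Measure Ω} {X Y : Ω → ℝ} {z : ℝ}

lemma integrable_exp_neg_mul [IsFiniteMeasure μ] (hX : AEMeasurable X μ) (hXnn : ∀ ω, 0 ≤ X ω)
    (hz : 0 ≤ z) : Integrable (fun ω => exp (-(z * X ω))) μ :=
  Integrable.of_bound (hX.const_mul z).neg.exp.aestronglyMeasurable 1 <|
    Filter.Eventually.of_forall fun ω => by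
      rw [norm_of_nonneg (exp_pos _).le, exp_le_one_iff, neg_nonpos]
      exact mul_nonneg hz (hXnn ω)

lemma integral_exp_neg_mul_mul_one_sub_of_indepFun [IsProbabilityMeasure μ]
    (hindep : ProbabilityTheory.IndepFun X Y μ) (hX : AEMeasurable X μ) (hY : AEMeasurable Y μ)
    (hXnn : ∀ ω, 0 ≤ X ω) (hz : 0 ≤ z) :
    ∫ ω, exp (-(z * Y ω)) * (1 - exp (-(z * X ω))) ∂μ
      = (∫ ω, exp (-(z * Y ω)) ∂μ) * (1 - ∫ ω, exp (-(z * X ω)) ∂μ) := by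
  have hindep' := hindep.symm.comp (φ := fun y => exp (-(z * y)))
    (ψ := fun x => 1 - exp (-(z * x))) (by fun_prop) (by fun_prop)
  calc ∫ ω, exp (-(z * Y ω)) * (1 - exp (-(z * X ω))) ∂μ
      = (∫ ω, exp (-(z * Y ω)) ∂μ) * ∫ ω, 1 - exp (-(z * X ω)) ∂μ :=
        hindep'.integral_fun_mul_eq_mul_integral (hY.const_mul z).neg.exp.aestronglyMeasurable
          (aemeasurable_const.sub (hX.const_mul z).neg.exp).aestronglyMeasurable
    _ = (∫ ω, exp (-(z * Y ω)) ∂μ) * (1 - ∫ ω, exp (-(z * X ω)) ∂μ) := by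
      rw [integral_sub (integrable_const 1) (integrable_exp_neg_mul hX hXnn hz), integral_const,
        probReal_univ, one_smul]

lemma lintegral_ofReal_mul_exp_neg_mul_mul_one_sub_of_indepFun [IsProbabilityMeasure μ]
    (hindep : ProbabilityTheory.IndepFun X Y μ) (hX : AEMeasurable X μ) (hY : AEMeasurable Y μ)
    (hXnn : ∀ ω, 0 ≤ X ω) (hYnn : ∀ ω, 0 ≤ Y ω) (hz : 0 ≤ z) {c : ℝ} (hc : 0 ≤ c) :
    ∫⁻ ω, ENNReal.ofReal (c * exp (-(z * Y ω)) * (1 - exp (-(z * X ω)))) ∂μ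
      = ENNReal.ofReal (c * (∫ ω, exp (-(z * Y ω)) ∂μ) * (1 - ∫ ω, exp (-(z * X ω)) ∂μ)) := by
  have hexpX_le (ω : Ω) : exp (-(z * X ω)) ≤ 1 := by
    rw [exp_le_one_iff, neg_nonpos]
    exact mul_nonneg hz (hXnn ω)
  have hint : Integrable (fun ω => exp (-(z * Y ω)) * (1 - exp (-(z * X ω)))) μ :=
    (integrable_exp_neg_mul hY hYnn hz).mul_bdd
      (aemeasurable_const.sub (hX.const_mul z).neg.exp).aestronglyMeasurable
      (c := 1) <| Filter.Eventually.of_forall fun ω => by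
        rw [norm_of_nonneg (sub_nonneg.2 (hexpX_le ω))]
        linarith [exp_pos (-(z * X ω))]
  simp_rw [mul_assoc c]
  rw [← integral_exp_neg_mul_mul_one_sub_of_indepFun hindep hX hY hXnn hz, ← integral_const_mul,
    ofReal_integral_eq_lintegral_ofReal (hint.const_mul c) <| Filter.Eventually.of_forall fun ω =>
      mul_nonneg hc (mul_nonneg (exp_pos _).le (sub_nonneg.2 (hexpX_le ω)))]

end Independence

/-- Hamdi's lemma (N = M = 1), independent form: if the nonnegative random variables `X`, `Y`
are independent, then
`E[ln(1 + X/(1+Y))] = ∫₀^∞ (e^{-z}/z) E[e^{-zY}] (1 - E[e^{-zX}]) dz`,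
both sides interpreted in `[0, ∞]`. -/
theorem average_rate_mgf_identity_indep
    {Ω : Type*} [MeasurableSpace Ω] (μ : Measure Ω) [IsProbabilityMeasure μ]
    (X Y : Ω → ℝ) (hX : Measurable X) (hY : Measurable Y)
    (hXnn : ∀ ω, 0 ≤ X ω) (hYnn : ∀ ω, 0 ≤ Y ω)
    (hindep : ProbabilityTheory.IndepFun X Y μ) :
    ∫⁻ ω, ENNReal.ofReal (Real.log (1 + X ω / (1 + Y ω))) ∂μ
      = ∫⁻ z in Ioi (0 : ℝ),
          ENNReal.ofReal ((Real.exp (-z) / z) *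
            (∫ ω, Real.exp (-(z * Y ω)) ∂μ) *
            (1 - (∫ ω, Real.exp (-(z * X ω)) ∂μ))) := by
  calc ∫⁻ ω, ENNReal.ofReal (log (1 + X ω / (1 + Y ω))) ∂μ
      = ∫⁻ ω, (∫⁻ z in Ioi (0 : ℝ), ENNReal.ofReal
          ((exp (-z) / z) * exp (-(z * Y ω)) * (1 - exp (-(z * X ω))))) ∂μ :=
        lintegral_congr fun ω => ofReal_log_one_add_div_one_add_eq_lintegral (hXnn ω) (hYnn ω)
    _ = ∫⁻ z in Ioi (0 : ℝ), ∫⁻ ω, ENNReal.ofReal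
          ((exp (-z) / z) * exp (-(z * Y ω)) * (1 - exp (-(z * X ω)))) ∂μ :=
        lintegral_lintegral_swap (by fun_prop)
    _ = _ := setLIntegral_congr_fun measurableSet_Ioi fun z hz =>
        lintegral_ofReal_mul_exp_neg_mul_mul_one_sub_of_indepFun hindep hX.aemeasurable
          hY.aemeasurable hXnn hYnn (le_of_lt hz) (div_nonneg (exp_pos _).le (le_of_lt hz))
end

section
/- (Corollary 3 and Remark 6(i).) Fix α > 2 and λ > 0. Let X and g be nonnegative random variables with X integrable and E[g^{2/α}] < ∞. Set M₀(z) = E[exp(-z·X)], M_I(z) = E[exp(-z·g)], T_I(z) = z^{2/α}·E[g^{2/α}·γ(1 − 2/α, z·g)], and Z_I(z) = M_I(z) + T_I(z) > 0. For SNR > 0 define R(SNR) = ∫₀^∞ (1 − M₀(SNR·y))·(G_I(y)/y) dy with G_I(y) = Z_I(SNR·y)^{-1} − (α/2)·(y/Z_I(SNR·y))·∫₀^∞ ξ^{α/2−1}·exp(-π·λ·Z_I(SNR·y)·ξ)·exp(-y·ξ^{α/2}) dξ. If ∫₀^∞ (1 − M₀(z))·Z_I(z)^{-(1 + α/2)}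 dz < ∞, then lim_{SNR→∞} R(SNR) = R^{(SNR∞)} := ∫₀^∞ (1 − M₀(z))/(z·Z_I(z)) dz, a quantity independent of both SNR and the base-station density λ. -/
open MeasureTheory Real Set Filter
open scoped ENNReal

/-- The lower incomplete gamma function `γ(a, x) = ∫₀^x t^{a-1} e^{-t} dt`. -/
noncomputable def lowerGamma (a x : ℝ) : ℝ :=
  ∫ t in Set.Ioc (0 : ℝ) x, t ^ (a - 1) * Real.exp (-t)

open scoped Topology

/-! Write `a = 1 - M₀(SNR·y) ≥ 0` and `Z = Z_I(SNR·y)`. The integrand of `R(SNR)` is `a/(yZ)`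
minus `a·(α/2)/Z·∫ ξ^{α/2-1} e^{-πλZξ} e^{-yξ^{α/2}} dξ ≥ 0`, and dropping `e^{-yξ^{α/2}}` bounds
that integral by `Γ(α/2)·(πλZ)^{-α/2}`. After the substitution `z = SNR·y` the main term integrates
to `R^{(SNR∞)}` for every `SNR`, because `dy/y` is scale invariant, while the error term integrates
to `SNR⁻¹·(α/2)·Γ(α/2)·(πλ)^{-α/2}·∫ (1 - M₀(z))·Z_I(z)^{-(1+α/2)} dz`, which tends to `0`. -/

lemma lowerGamma_monotone {a : ℝ} (ha : 0 < a) : Monotone (lowerGamma a) := by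
  intro x x' hxx'
  have hint : IntegrableOn (fun t : ℝ => t ^ (a - 1) * exp (-t)) (Ioc 0 x') :=
    ((GammaIntegral_convergent ha).mono_set Ioc_subset_Ioi_self).congr_fun
      (fun t _ => mul_comm _ _) measurableSet_Ioc
  refine setIntegral_mono_set hint ?_ (Ioc_subset_Ioc_right hxx').eventuallyLE
  filter_upwards [ae_restrict_mem measurableSet_Ioc] with t ht
  exact mul_nonneg (rpow_nonneg ht.1.le _) (exp_pos _).le

lemma measurable_lowerGamma {a : ℝ} (ha : 0 < a) : Measurable (lowerGamma a) :=
  (lowerGamma_monotone ha).measurable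

section

variable {Ω : Type*} [MeasurableSpace Ω] (μ : Measure Ω)

lemma measurable_integral_of_measurable_uncurry {α : Type*} [MeasurableSpace α] [SFinite μ]
    {f : α → Ω → ℝ} (hf : Measurable (Function.uncurry f)) :
    Measurable fun z => ∫ ω, f z ω ∂μ :=
  hf.stronglyMeasurable.integral_prod_right.measurable

lemma integral_exp_neg_mul_le_one [IsProbabilityMeasure μ] {X : Ω → ℝ} (hX : ∀ ω, 0 ≤ X ω)
    {z : ℝ} (hz : 0 ≤ z) : ∫ ω, exp (-(z * X ω)) ∂μ ≤ 1 := by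
  have hle : ∀ ω, ‖exp (-(z * X ω))‖ ≤ 1 := fun ω => by
    rw [norm_of_nonneg (exp_pos _).le, exp_le_one_iff, neg_nonpos]
    exact mul_nonneg hz (hX ω)
  simpa using (le_abs_self _).trans (norm_integral_le_of_norm_le_const (μ := μ) (ae_of_all _ hle))

end

lemma integral_rpow_mul_exp_neg_mul_mul_exp_neg_mul_rpow_Ioi_le {β c y : ℝ} (hβ : 0 < β)
    (hc : 0 < c) (hy : 0 ≤ y) :
    ∫ ξ in Ioi 0, ξ ^ (β - 1) * exp (-(c * ξ)) * exp (-(y * ξ ^ β)) ≤ (1 / c) ^ β * Gamma β := by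
  have hint : IntegrableOn (fun ξ : ℝ => ξ ^ (β - 1) * exp (-(c * ξ))) (Ioi 0) := by
    refine (integrableOn_rpow_mul_exp_neg_mul_rpow (s := β - 1) (p := 1) (by linarith) one_pos
      hc).congr_fun (fun ξ _ => ?_) measurableSet_Ioi
    simp only [rpow_one, neg_mul]
  rw [← integral_rpow_mul_exp_neg_mul_Ioi hβ hc]
  refine integral_mono_of_nonneg ?_ hint ?_
  all_goals filter_upwards [ae_restrict_mem measurableSet_Ioi] with ξ (hξ : 0 < ξ)
  · positivity
  · exact mul_le_of_le_one_right (by positivity)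
      (exp_le_one_iff.mpr (neg_nonpos.mpr (by positivity)))

/-- The kernel `G_I(y)` of the average-rate integral, for `β = α/2`, `p = πλ` and
`Z = Z_I(SNR·y)`. -/
noncomputable def rateKernel (β p Z y : ℝ) : ℝ :=
  Z⁻¹ - β * (y / Z) * ∫ ξ in Ioi 0, ξ ^ (β - 1) * exp (-(p * Z * ξ)) * exp (-(y * ξ ^ β))

section rateKernel

variable {β p Z y : ℝ}

lemma rateKernel_le_inv (hβ : 0 < β) (hZ : 0 < Z) (hy : 0 ≤ y) : rateKernel β p Z y ≤ Z⁻¹ := by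
  rw [rateKernel, sub_le_self_iff]
  have hJ : 0 ≤ ∫ ξ in Ioi 0, ξ ^ (β - 1) * exp (-(p * Z * ξ)) * exp (-(y * ξ ^ β)) :=
    setIntegral_nonneg measurableSet_Ioi fun ξ (hξ : 0 < ξ) => by positivity
  positivity

lemma inv_sub_le_rateKernel (hβ : 0 < β) (hp : 0 < p) (hZ : 0 < Z) (hy : 0 ≤ y) :
    Z⁻¹ - y * (β * Gamma β * p ^ (-β) * Z ^ (-(1 + β))) ≤ rateKernel β p Z y := by
  have hJ := integral_rpow_mul_exp_neg_mul_mul_exp_neg_mul_rpow_Ioi_le hβ (mul_pos hp hZ) hy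
  rw [one_div, inv_rpow (mul_pos hp hZ).le, ← rpow_neg (mul_pos hp hZ).le,
    mul_rpow hp.le hZ.le] at hJ
  rw [rateKernel, neg_add, rpow_add hZ, rpow_neg_one, sub_le_sub_iff_left]
  calc β * (y / Z) * _ ≤ β * (y / Z) * (p ^ (-β) * Z ^ (-β) * Gamma β) := by gcongr
    _ = y * (β * Gamma β * p ^ (-β) * (Z⁻¹ * Z ^ (-β))) := by ring

lemma mul_rateKernel_div_mem_Icc {a : ℝ} (hβ : 0 < β) (hp : 0 < p) (hZ : 0 < Z) (hy : 0 < y)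
    (ha : 0 ≤ a) :
    a * (rateKernel β p Z y / y) ∈
      Icc (a / Z / y - β * Gamma β * p ^ (-β) * (a * Z ^ (-(1 + β)))) (a / Z / y) := by
  constructor
  · calc a / Z / y - β * Gamma β * p ^ (-β) * (a * Z ^ (-(1 + β)))
        = a * ((Z⁻¹ - y * (β * Gamma β * p ^ (-β) * Z ^ (-(1 + β)))) / y) := by
          field_simp
      _ ≤ a * (rateKernel β p Z y / y) := by
          gcongr
          exact inv_sub_le_rateKernel hβ hp hZ hy.le
  · calc a * (rateKernel β p Z y / y) ≤ a * (Z⁻¹ / y) := by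
          gcongr
          exact rateKernel_le_inv hβ hZ hy.le
      _ = a / Z / y := by ring

end rateKernel

lemma lintegral_Ioi_comp_mul_left {c : ℝ} (hc : 0 < c) (F : ℝ → ℝ≥0∞) :
    ∫⁻ y in Ioi 0, F (c * y) = ENNReal.ofReal c⁻¹ * ∫⁻ z in Ioi 0, F z := by
  set e : ℝ ≃ᵐ ℝ := (Homeomorph.mulLeft₀ c hc.ne').toMeasurableEquiv
  have hpre : e ⁻¹' Ioi 0 = Ioi 0 := by
    ext y
    simp [e, mul_pos_iff_of_pos_left hc]
  have hmap : Measure.map e (volume.restrict (Ioi 0)) =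
      (ENNReal.ofReal c⁻¹ • volume).restrict (Ioi 0) := by
    rw [← abs_of_pos (inv_pos.mpr hc), ← Real.map_volume_mul_left hc.ne',
      show (fun x => c * x) = ⇑e from rfl, Measure.restrict_map e.measurable measurableSet_Ioi,
      hpre]
  calc ∫⁻ y in Ioi 0, F (c * y) = ∫⁻ z, F z ∂(Measure.map e (volume.restrict (Ioi 0))) :=
        (lintegral_map_equiv F e).symm
    _ = ENNReal.ofReal c⁻¹ * ∫⁻ z in Ioi 0, F z := by
        rw [hmap, Measure.restrict_smul, lintegral_smul_measure, smul_eq_mul]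

lemma lintegral_Ioi_ofReal_comp_mul_left_div {c : ℝ} (hc : 0 < c) (F : ℝ → ℝ) :
    ∫⁻ y in Ioi 0, ENNReal.ofReal (F (c * y) / y) = ∫⁻ z in Ioi 0, ENNReal.ofReal (F z / z) := by
  have hscale : ∀ y, ENNReal.ofReal (F (c * y) / y) =
      ENNReal.ofReal c * ENNReal.ofReal (F (c * y) / (c * y)) := fun y => by
    rw [← ENNReal.ofReal_mul hc.le, ← mul_div_assoc, mul_div_mul_left _ _ hc.ne']
  simp_rw [hscale]
  rw [lintegral_const_mul' _ _ ENNReal.ofReal_ne_top, lintegral_Ioi_comp_mul_left hc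
    (fun z => ENNReal.ofReal (F z / z)), ← mul_assoc, ← ENNReal.ofReal_mul hc.le,
    mul_inv_cancel₀ hc.ne', ENNReal.ofReal_one, one_mul]

lemma setLIntegral_ofReal_le_add {α : Type*} [MeasurableSpace α] {μ : Measure α} {s : Set α}
    {f g h : α → ℝ} (hs : MeasurableSet s) (hh : Measurable h) (hle : ∀ x ∈ s, f x ≤ g x + h x) :
    ∫⁻ x in s, ENNReal.ofReal (f x) ∂μ ≤
      ∫⁻ x in s, ENNReal.ofReal (g x) ∂μ + ∫⁻ x in s, ENNReal.ofReal (h x) ∂μ := by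
  rw [← lintegral_add_right' _ hh.ennreal_ofReal.aemeasurable]
  exact setLIntegral_mono' hs fun x hx =>
    (ENNReal.ofReal_le_ofReal (hle x hx)).trans ENNReal.ofReal_add_le

lemma ENNReal.tendsto_atTop_of_le_of_le_add_inv_mul {f : ℝ → ℝ≥0∞} {L C : ℝ≥0∞} (hC : C ≠ ⊤)
    (hup : ∀ S > 0, f S ≤ L) (hlow : ∀ S > 0, L ≤ f S + ENNReal.ofReal S⁻¹ * C) :
    Tendsto f atTop (𝓝 L) := by
  have herr : Tendsto (fun S : ℝ => ENNReal.ofReal S⁻¹ * C) atTop (𝓝 0) := by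
    simpa using
      ENNReal.Tendsto.mul_const (ENNReal.tendsto_ofReal tendsto_inv_atTop_zero) (Or.inr hC)
  refine tendsto_of_tendsto_of_tendsto_of_le_of_le'
    (by simpa using ENNReal.Tendsto.sub tendsto_const_nhds herr (Or.inr ENNReal.zero_ne_top))
    tendsto_const_nhds ?_ ?_
  · filter_upwards [eventually_gt_atTop 0] with S hS
    exact tsub_le_iff_right.mpr (hlow S hS)
  · filter_upwards [eventually_gt_atTop 0] with S hS
    exact hup S hS

theorem tendsto_setLIntegral_Ioi_of_scaled_sandwich {r : ℝ → ℝ → ℝ} {u v : ℝ → ℝ} {K : ℝ}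
    (hK : 0 ≤ K) (hv : Measurable v) (hfin : ∫⁻ z in Ioi 0, ENNReal.ofReal (v z) ≠ ⊤)
    (hbounds : ∀ S > 0, ∀ y > 0, r S y ∈ Icc (u (S * y) / y - K * v (S * y)) (u (S * y) / y)) :
    Tendsto (fun S => ∫⁻ y in Ioi 0, ENNReal.ofReal (r S y)) atTop
      (𝓝 (∫⁻ z in Ioi 0, ENNReal.ofReal (u z / z))) := by
  refine ENNReal.tendsto_atTop_of_le_of_le_add_inv_mul
    (ENNReal.mul_ne_top (ENNReal.ofReal_ne_top (r := K)) hfin) (fun S hS => ?_) (fun S hS => ?_)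
  · rw [← lintegral_Ioi_ofReal_comp_mul_left_div hS]
    exact setLIntegral_mono' measurableSet_Ioi fun y hy =>
      ENNReal.ofReal_le_ofReal (hbounds S hS y hy).2
  · have herr : ∫⁻ y in Ioi 0, ENNReal.ofReal (K * v (S * y)) =
        ENNReal.ofReal S⁻¹ * (ENNReal.ofReal K * ∫⁻ z in Ioi 0, ENNReal.ofReal (v z)) := by
      simp_rw [ENNReal.ofReal_mul hK]
      rw [lintegral_const_mul' _ _ ENNReal.ofReal_ne_top,
        lintegral_Ioi_comp_mul_left hS fun z => ENNReal.ofReal (v z), mul_left_comm]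
    rw [← lintegral_Ioi_ofReal_comp_mul_left_div hS, ← herr]
    exact setLIntegral_ofReal_le_add measurableSet_Ioi
      (measurable_const.mul (hv.comp (measurable_const_mul S)))
      fun y hy => by linarith [(hbounds S hS y hy).1]

theorem average_rate_interference_limited_limit_general
    {Ω : Type*} [MeasurableSpace Ω] (μ : Measure Ω) [IsProbabilityMeasure μ]
    (α lam : ℝ) (hα : 2 < α) (hlam : 0 < lam)
    (X g : Ω → ℝ) (hX : Measurable X) (hg : Measurable g)
    (hXnn : ∀ ω, 0 ≤ X ω)
    (M₀ MI TI ZI : ℝ → ℝ)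
    (hM₀ : ∀ z, M₀ z = ∫ ω, Real.exp (-(z * X ω)) ∂μ)
    (hMI : ∀ z, MI z = ∫ ω, Real.exp (-(z * g ω)) ∂μ)
    (hTI : ∀ z, TI z = z ^ (2 / α) * ∫ ω, g ω ^ (2 / α) * lowerGamma (1 - 2 / α) (z * g ω) ∂μ)
    (hZI : ∀ z, ZI z = MI z + TI z)
    (hZpos : ∀ z, 0 < ZI z)
    (GI : ℝ → ℝ → ℝ)
    (hGI : ∀ y SNR, GI y SNR = (ZI (SNR * y))⁻¹ - (α / 2) * (y / ZI (SNR * y)) *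
        ∫ ξ in Set.Ioi (0 : ℝ),
          ξ ^ (α / 2 - 1) * Real.exp (-(π * lam * ZI (SNR * y) * ξ)) *
            Real.exp (-(y * ξ ^ (α / 2))))
    (R : ℝ → ℝ≥0∞)
    (hR : ∀ SNR, R SNR = ∫⁻ y in Set.Ioi (0 : ℝ),
        ENNReal.ofReal ((1 - M₀ (SNR * y)) * (GI y SNR / y)))
    (hfin : (∫⁻ z in Set.Ioi (0 : ℝ),
        ENNReal.ofReal ((1 - M₀ z) * ZI z ^ (-(1 + α / 2)))) < ⊤) :
    Tendsto R atTop
      (nhds (∫⁻ z in Set.Ioi (0 : ℝ), ENNReal.ofReal ((1 - M₀ z) / (z * ZI z)))) := by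
  have hβ : 0 < α / 2 := by linarith
  have hM₀meas : Measurable M₀ :=
    funext hM₀ ▸ measurable_integral_of_measurable_uncurry μ (by fun_prop)
  have hZmeas : Measurable ZI := by
    have := measurable_lowerGamma (a := 1 - 2 / α) (by linarith [(div_lt_one (by linarith)).2 hα])
    rw [funext hZI, funext hMI, funext hTI]
    exact (measurable_integral_of_measurable_uncurry μ (by fun_prop)).add
      ((measurable_id.pow_const _).mul (measurable_integral_of_measurable_uncurry μ (by fun_prop)))
  have hgap : ∀ z, 0 ≤ z → 0 ≤ 1 - M₀ z := fun z hz => by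
    rw [hM₀]
    linarith [integral_exp_neg_mul_le_one μ hXnn hz]
  simp_rw [div_mul_eq_div_div_swap, funext hR, hGI]
  exact tendsto_setLIntegral_Ioi_of_scaled_sandwich (by positivity) (by fun_prop) hfin.ne
    fun S hS y hy => mul_rateKernel_div_mem_Icc hβ (by positivity) (hZpos _) hy
      (hgap _ (by positivity))

/-- Corollary 3 and Remark 6(i): in the interference-limited regime the single-tier
average rate `R(SNR)` converges, as `SNR → ∞`, to
`R^{(SNR∞)} = ∫₀^∞ (1 - M₀(z))/(z Z_I(z)) dz`, a quantity independent of `SNR` and `λ`. -/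
theorem average_rate_interference_limited_limit
    {Ω : Type*} [MeasurableSpace Ω] (μ : Measure Ω) [IsProbabilityMeasure μ]
    (α lam : ℝ) (hα : 2 < α) (hlam : 0 < lam)
    (X g : Ω → ℝ) (hX : Measurable X) (hg : Measurable g)
    (hXnn : ∀ ω, 0 ≤ X ω) (hgnn : ∀ ω, 0 ≤ g ω)
    (hXint : Integrable X μ) (hgint : Integrable (fun ω => g ω ^ (2 / α)) μ)
    (M₀ MI TI ZI : ℝ → ℝ)
    (hM₀ : ∀ z, M₀ z = ∫ ω, Real.exp (-(z * X ω)) ∂μ)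
    (hMI : ∀ z, MI z = ∫ ω, Real.exp (-(z * g ω)) ∂μ)
    (hTI : ∀ z, TI z = z ^ (2 / α) * ∫ ω, g ω ^ (2 / α) * lowerGamma (1 - 2 / α) (z * g ω) ∂μ)
    (hZI : ∀ z, ZI z = MI z + TI z)
    (hZpos : ∀ z, 0 < ZI z)
    (GI : ℝ → ℝ → ℝ)
    (hGI : ∀ y SNR, GI y SNR = (ZI (SNR * y))⁻¹ - (α / 2) * (y / ZI (SNR * y)) *
        ∫ ξ in Set.Ioi (0 : ℝ),
          ξ ^ (α / 2 - 1) * Real.exp (-(π * lam * ZI (SNR * y) * ξ)) *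
            Real.exp (-(y * ξ ^ (α / 2))))
    (R : ℝ → ℝ≥0∞)
    (hR : ∀ SNR, R SNR = ∫⁻ y in Set.Ioi (0 : ℝ),
        ENNReal.ofReal ((1 - M₀ (SNR * y)) * (GI y SNR / y)))
    (hfin : (∫⁻ z in Set.Ioi (0 : ℝ),
        ENNReal.ofReal ((1 - M₀ z) * ZI z ^ (-(1 + α / 2)))) < ⊤) :
    Tendsto R atTop
      (nhds (∫⁻ z in Set.Ioi (0 : ℝ), ENNReal.ofReal ((1 - M₀ z) / (z * ZI z)))) :=
  average_rate_interference_limited_limit_general μ α lam hα hlam X g hX hg hXnn M₀ MI TI ZI hM₀ hMI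
    hTI hZI hZpos GI hGI R hR hfin
end
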